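/- arXiv:1311.2022 — 9 statements merged into one kernel-verified Lean document; each statement's English description precedes it below -/
import Mathlib

section
/- If a directed graph G is p-solvable, then the lexicographic product (G, r) of G with the clique K_r is q-solvable, where q = p·r. -/
/-- A directed graph (arc `u → v` meaning `v` sees `u`'s hat) is `q`-solvable if there
are guessing functions, each depending only on the hats the vertex sees, such that
every hat assignment is guessed correctly by some vertex. -/
def HatSolvable {V : Type*} (adj : V → V → Prop) (q : ℕ) : Prop :=
  ∃ f : V → ((V → Fin q) → Fin q),
    (∀ (v : V) (x y : V → Fin q), (∀ u, adj u v → x u = y u) → f v x = f v y) ∧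
    ∀ x : V → Fin q, ∃ v, f v x = x v

/-- The blow-up lemma: if $G$ is $p$-solvable then the lexicographic product $(G,r)$
is $pr$-solvable. -/
theorem blowup_lemma {V : Type*} (adj : V → V → Prop) (p r : ℕ) (hr : 0 < r)
    (h : HatSolvable adj p) :
    HatSolvable (fun a b : V × Fin r => adj a.1 b.1 ∨ (a.1 = b.1 ∧ a.2 ≠ b.2)) (p * r) := by
  haveI : NeZero r := ⟨hr.ne'⟩
  obtain ⟨F, hF, hFs⟩ := h
  set e : Fin p × Fin r ≃ Fin (p * r) := finProdFinEquiv with he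
  -- quotient and remainder of a hat
  set quo : ((V × Fin r) → Fin (p * r)) → (V × Fin r) → Fin p :=
    fun x w => (e.symm (x w)).1 with hquo
  set rem : ((V × Fin r) → Fin (p * r)) → (V × Fin r) → Fin r :=
    fun x w => (e.symm (x w)).2 with hrem
  -- total sum of remainders in a clique copy
  set S : ((V × Fin r) → Fin (p * r)) → V → Fin r :=
    fun x v => ∑ b : Fin r, rem x (v, b) with hS
  -- induced p-colouring
  set Y : ((V × Fin r) → Fin (p * r)) → V → Fin p :=
    fun x v => quo x (v, S x v) with hY
  refine ⟨fun w x => e (F w.1 (Y x), w.2 - ∑ b ∈ Finset.univ.erase w.2, rem x (w.1, b)),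
    ?_, ?_⟩
  · rintro ⟨v, a⟩ x x' hxy
    have hsee : ∀ w : V × Fin r, adj w.1 v ∨ (w.1 = v ∧ w.2 ≠ a) → x w = x' w := hxy
    have hYeq : ∀ u, adj u v → Y x u = Y x' u := by
      intro u hu
      have hxu : ∀ b : Fin r, x (u, b) = x' (u, b) := fun b => hsee (u, b) (Or.inl hu)
      have hremu : ∀ b : Fin r, rem x (u, b) = rem x' (u, b) := by
        intro b; simp only [hrem, hxu b]
      have hSu : S x u = S x' u := by
        simp only [hS]; exact Finset.sum_congr rfl fun b _ => hremu b
      simp only [hY, hquo, hSu, hxu]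
    have h1 : F v (Y x) = F v (Y x') := hF v _ _ hYeq
    have h2 : ∀ b ∈ Finset.univ.erase a, rem x (v, b) = rem x' (v, b) := by
      intro b hb
      have : x (v, b) = x' (v, b) :=
        hsee (v, b) (Or.inr ⟨rfl, Finset.ne_of_mem_erase hb⟩)
      simp only [hrem, this]
    simp only [h1, Finset.sum_congr rfl h2]
  · intro x
    obtain ⟨v, hv⟩ := hFs (Y x)
    refine ⟨(v, S x v), ?_⟩
    have hx : x (v, S x v) = e (quo x (v, S x v), rem x (v, S x v)) := by
      simp only [hquo, hrem]
      exact (e.apply_symm_apply _).symm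
    rw [hx]
    refine congrArg e (Prod.ext ?_ ?_)
    · exact hv
    · show S x v - ∑ b ∈ Finset.univ.erase (S x v), rem x (v, b) = rem x (v, S x v)
      have key := Finset.add_sum_erase Finset.univ (fun b => rem x (v, b))
        (Finset.mem_univ (S x v))
      rw [sub_eq_iff_eq_add]
      conv_lhs => rw [hS]
      exact key.symm
end

section
/- For every q divisible by 3, there exists a q-solvable undirected graph on 4q/3 vertices with clique number 2q/3. -/
open Finset

/-- `HatSolvable` with an arbitrary type of hat colours. -/
def HatWinnable {V : Type*} (adj : V → V → Prop) (α : Type*) : Prop :=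
  ∃ f : V → (V → α) → α,
    (∀ (v : V) (x y : V → α), (∀ u, adj u v → x u = y u) → f v x = f v y) ∧
    ∀ x : V → α, ∃ v, f v x = x v

theorem hatSolvable_iff_hatWinnable {V : Type*} (adj : V → V → Prop) (q : ℕ) :
    HatSolvable adj q ↔ HatWinnable adj (Fin q) :=
  Iff.rfl

namespace SimpleGraph

variable {V ι : Type*} {G : SimpleGraph V}

theorem CliqueFree.card_le_of_isClique {k : ℕ} (h : G.CliqueFree (k + 1)) {s : Finset V}
    (hs : G.IsClique s) : #s ≤ k := by
  by_contra! hk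
  obtain ⟨t, hts, ht⟩ := exists_subset_card_eq hk
  exact h t ⟨hs.subset (by simpa using hts), ht⟩

theorem completeBipartiteGraph_not_cliqueFree_two (V W : Type*) [Nonempty V] [Nonempty W] :
    ¬ (completeBipartiteGraph V W).CliqueFree 2 := by
  rw [cliqueFree_two]
  intro h
  have hadj : (completeBipartiteGraph V W).Adj (.inl (Classical.arbitrary V))
      (.inr (Classical.arbitrary W)) := by simp
  simp [h] at hadj

theorem completeBipartiteGraph_cliqueFree_three (V W : Type*) :
    (completeBipartiteGraph V W).CliqueFree 3 :=
  (CompleteBipartiteGraph.bicoloring V W).colorable.cliqueFree (by simp)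

/-- The lexicographic product `G[K_ι]`. -/
def blowUp (G : SimpleGraph V) (ι : Type*) : SimpleGraph (V × ι) where
  Adj p q := G.Adj p.1 q.1 ∨ (p.1 = q.1 ∧ p.2 ≠ q.2)
  symm := ⟨fun _ _ => Or.imp Adj.symm fun h => ⟨h.1.symm, h.2.symm⟩⟩
  loopless := ⟨fun _ h => h.elim G.irrefl fun h => h.2 rfl⟩

theorem IsNClique.prod_univ [Fintype ι] {k : ℕ} {s : Finset V} (hs : G.IsNClique k s) :
    (G.blowUp ι).IsNClique (k * Fintype.card ι) (s ×ˢ univ) := by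
  refine ⟨fun p hp q hq hpq => ?_, by simp [hs.card_eq]⟩
  simp only [coe_product, coe_univ, Set.mem_prod, Set.mem_univ, and_true] at hp hq
  by_cases h : p.1 = q.1
  · exact Or.inr ⟨h, fun h' => hpq (Prod.ext h h')⟩
  · exact Or.inl (hs.isClique hp hq h)

theorem not_cliqueFree_blowUp [Fintype ι] {k : ℕ} (h : ¬ G.CliqueFree k) :
    ¬ (G.blowUp ι).CliqueFree (k * Fintype.card ι) := by
  simp only [CliqueFree, not_forall, not_not] at h ⊢
  obtain ⟨s, hs⟩ := h
  exact ⟨_, hs.prod_univ⟩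

theorem CliqueFree.blowUp [Fintype ι] {k : ℕ} (h : G.CliqueFree (k + 1)) :
    (G.blowUp ι).CliqueFree (k * Fintype.card ι + 1) := by
  classical
  intro s hs
  have himage : G.IsClique (s.image Prod.fst : Set V) := by
    simp only [coe_image]
    rintro _ ⟨p, hp, rfl⟩ _ ⟨q, hq, rfl⟩ hpq
    exact (hs.isClique hp hq fun h => hpq (congrArg _ h)).resolve_right fun h => hpq h.1
  have hfiber : ∀ v ∈ s.image Prod.fst, #{p ∈ s | p.1 = v} ≤ Fintype.card ι := fun v _ =>
    calc #{p ∈ s | p.1 = v} ≤ #({v} ×ˢ (univ : Finset ι)) :=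
          card_le_card fun p hp => by
            rw [(mem_filter.mp hp).2.symm]; simp
      _ = Fintype.card ι := by simp
  have := card_le_mul_card_image s _ hfiber
  have := h.card_le_of_isClique himage
  have := hs.card_eq
  nlinarith

end SimpleGraph

open SimpleGraph

namespace HatWinnable

variable {V ι α : Type*} [Fintype ι] [AddCommGroup ι]

theorem of_equiv {β : Type*} {adj : V → V → Prop} (h : HatWinnable adj α)
    (e : α ≃ β) : HatWinnable adj β := by
  obtain ⟨f, hlocal, hwin⟩ := h
  refine ⟨fun v x => e (f v (e.symm ∘ x)), fun v x y hxy => ?_, fun x => ?_⟩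
  · exact congrArg e (hlocal v _ _ fun u hu => congrArg e.symm (hxy u hu))
  · obtain ⟨v, hv⟩ := hwin (e.symm ∘ x)
    exact ⟨v, by simp [hv]⟩

theorem of_iso {W : Type*} {G : SimpleGraph V} {H : SimpleGraph W} (e : G ≃g H)
    (h : HatWinnable G.Adj α) : HatWinnable H.Adj α := by
  obtain ⟨f, hlocal, hwin⟩ := h
  refine ⟨fun w x => f (e.symm w) (x ∘ e), fun w x y hxy => ?_, fun x => ?_⟩
  · refine hlocal _ _ _ fun u hu => hxy (e u) ?_
    simpa using e.map_adj_iff.mpr hu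
  · obtain ⟨v, hv⟩ := hwin (x ∘ e)
    exact ⟨e v, by simpa using hv⟩

def fineSum (x : V × ι → α × ι) (v : V) : ι :=
  ∑ j, (x (v, j)).2

def leaderCoarse (x : V × ι → α × ι) (v : V) : α :=
  (x (v, fineSum x v)).1

theorem blowUp [DecidableEq ι] {G : SimpleGraph V} (h : HatWinnable G.Adj α) :
    HatWinnable (G.blowUp ι).Adj (α × ι) := by
  obtain ⟨f, hlocal, hwin⟩ := h
  refine ⟨fun p x => (f p.1 (leaderCoarse x), p.2 - ∑ j ∈ univ.erase p.2, (x (p.1, j)).2),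
    ?_, fun x => ?_⟩
  · rintro ⟨v, j⟩ x y hxy
    have hcoarse : ∀ u, G.Adj u v → leaderCoarse x u = leaderCoarse y u := by
      intro u hu
      have hclique : ∀ k, x (u, k) = y (u, k) := fun k => hxy _ (Or.inl hu)
      simp only [leaderCoarse, fineSum, hclique]
    have hfine : ∀ k ∈ univ.erase j, (x (v, k)).2 = (y (v, k)).2 := fun k hk =>
      congrArg Prod.snd (hxy _ (Or.inr ⟨rfl, ne_of_mem_erase hk⟩))
    simp only [hlocal v _ _ hcoarse, sum_congr rfl hfine]
  · obtain ⟨v, hv⟩ := hwin (leaderCoarse x)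
    refine ⟨(v, fineSum x v), Prod.ext hv ?_⟩
    simp [sum_erase_eq_sub, fineSum]

end HatWinnable

def k22Table : Fin 2 ⊕ Fin 2 → Fin 3 → Fin 3 → Fin 3
  | .inl 0 => ![![0, 0, 1], ![1, 0, 2], ![2, 1, 2]]
  | .inl 1 => ![![0, 1, 0], ![1, 2, 0], ![2, 2, 1]]
  | .inr 0 => ![![2, 2, 1], ![2, 1, 0], ![1, 0, 0]]
  | .inr 1 => ![![0, 2, 2], ![1, 0, 2], ![1, 1, 0]]

theorem k22Table_wins (a b c d : Fin 3) :
    k22Table (.inl 0) c d = a ∨ k22Table (.inl 1) c d = b ∨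
      k22Table (.inr 0) a b = c ∨ k22Table (.inr 1) a b = d := by
  revert a b c d
  decide

def otherSide : Fin 2 ⊕ Fin 2 → Fin 2 → Fin 2 ⊕ Fin 2 :=
  Sum.elim (fun _ => .inr) (fun _ => .inl)

theorem otherSide_adj (v : Fin 2 ⊕ Fin 2) (i : Fin 2) :
    (completeBipartiteGraph (Fin 2) (Fin 2)).Adj (otherSide v i) v := by
  cases v <;> simp [otherSide]

theorem completeBipartiteGraph_hatWinnable :
    HatWinnable (completeBipartiteGraph (Fin 2) (Fin 2)).Adj (Fin 3) := by
  refine ⟨fun v x => k22Table v (x (otherSide v 0)) (x (otherSide v 1)), fun v x y hxy => ?_,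
    fun x => ?_⟩
  · simp only [hxy _ (otherSide_adj v _)]
  · rcases k22Table_wins (x (.inl 0)) (x (.inl 1)) (x (.inr 0)) (x (.inr 1)) with h | h | h | h
    all_goals exact ⟨_, h⟩

/-- For any $q$ divisible by 3 there is a $q$-solvable graph on $4q/3$ vertices with
clique number $2q/3$. -/
theorem solvable_four_thirds (q : ℕ) (hq : 0 < q) (h3 : 3 ∣ q) :
    ∃ G : SimpleGraph (Fin (4 * q / 3)),
      HatSolvable G.Adj q ∧ ¬ G.CliqueFree (2 * q / 3) ∧ G.CliqueFree (2 * q / 3 + 1) := by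
  obtain ⟨m, rfl⟩ := h3
  have : NeZero m := ⟨by omega⟩
  let H := (completeBipartiteGraph (Fin 2) (Fin 2)).blowUp (Fin m)
  have hcard : Fintype.card ((Fin 2 ⊕ Fin 2) × Fin m) = 4 * (3 * m) / 3 := by simp; omega
  have hclique : 2 * (3 * m) / 3 = 2 * Fintype.card (Fin m) := by simp; omega
  let e := H.overFinIso hcard
  refine ⟨H.overFin hcard, ?_, ?_, ?_⟩
  · rw [hatSolvable_iff_hatWinnable]
    exact completeBipartiteGraph_hatWinnable.blowUp.of_equiv finProdFinEquiv |>.of_iso e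
  · rw [hclique]
    exact fun h => not_cliqueFree_blowUp (completeBipartiteGraph_not_cliqueFree_two _ _)
      (h.comap e.isContained)
  · rw [hclique]
    exact (completeBipartiteGraph_cliqueFree_three _ _).blowUp.comap e.symm.isContained
end

section
/- Every (m, s)-semibipartite directed graph is not (m+2)-solvable. -/
/-- Any $(m,s)$-semibipartite directed graph is not $(m+2)$-solvable. -/
theorem semibipartite_not_solvable {V : Type*} [Fintype V] (adj : V → V → Prop)
    (L R : Set V) (m s : ℕ)
    (hpart : ∀ v, v ∈ L ↔ v ∉ R)
    (hm : L.ncard = m) (hs : R.ncard = s)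
    (hL : ∀ u ∈ L, ∀ v ∈ L, ¬ adj u v)
    (hR : ∀ v, ¬ Relation.TransGen (fun a b => a ∈ R ∧ b ∈ R ∧ adj a b) v v) :
    ¬ HatSolvable adj (m + 2) := by
  classical
  rintro ⟨f, hdep, hguess⟩
  set rel : V → V → Prop := Relation.TransGen (fun a b => a ∈ R ∧ b ∈ R ∧ adj a b) with hrel
  have hwf : WellFounded rel := by
    have h1 : IsIrrefl V rel := ⟨hR⟩
    have h2 : IsTrans V rel := ⟨fun a b c => Relation.TransGen.trans⟩
    exact Finite.wellFounded_of_trans_of_irrefl rel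
  -- recursive hat choice on R (defined on all of V for convenience)
  let W : (v : V) → (∀ u, rel u v → Fin (m + 2)) → Fin (m + 2) → (V → Fin (m + 2)) :=
    fun v ih a u => if u ∈ L then a else if h : rel u v then ih u h else 0
  let F : (v : V) → (∀ u, rel u v → Fin (m + 2)) → Fin (m + 2) := fun v ih =>
    let S : Finset (Fin (m + 2)) :=
      (Finset.univ.erase 0).image (fun a => f v (W v ih a))
    if h : ∃ b, b ∉ S then h.choose else 0
  let z : V → Fin (m + 2) := hwf.fix F
  have hz : ∀ v, z v = F v (fun u _ => z u) := fun v => hwf.fix_eq F v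
  -- the key avoidance property of z
  have havoid : ∀ v : V, ∀ a : Fin (m + 2), a ≠ 0 →
      f v (W v (fun u _ => z u) a) ≠ z v := by
    intro v a ha
    set S : Finset (Fin (m + 2)) :=
      (Finset.univ.erase 0).image (fun a => f v (W v (fun u _ => z u) a)) with hS
    have hcard : S.card < Fintype.card (Fin (m + 2)) := by
      have h1 : S.card ≤ (Finset.univ.erase (0 : Fin (m + 2))).card :=
        Finset.card_image_le
      have h2 : (Finset.univ.erase (0 : Fin (m + 2))).card = m + 1 := by
        rw [Finset.card_erase_of_mem (Finset.mem_univ _), Finset.card_univ,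
          Fintype.card_fin]
        omega
      simp only [Fintype.card_fin]
      omega
    have hex : ∃ b, b ∉ S := by
      by_contra h
      push_neg at h
      have : Finset.univ ⊆ S := fun b _ => h b
      have := Finset.card_le_card this
      rw [Finset.card_univ] at this
      omega
    have hmem : f v (W v (fun u _ => z u) a) ∈ S := by
      apply Finset.mem_image_of_mem
      exact Finset.mem_erase.mpr ⟨ha, Finset.mem_univ _⟩
    have hzv : z v = hex.choose := by
      rw [hz v]
      simp only [F]
      rw [dif_pos hex]
    rw [hzv]
    intro h
    exact hex.choose_spec (h ▸ hmem)
  -- guesses of L vertices do not depend on the constant value a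
  let g : V → Fin (m + 2) := fun v => f v (fun u => if u ∈ L then 0 else z u)
  have hLfin : L.Finite := Set.toFinite L
  -- choose a₀ ≠ 0 avoiding all L guesses
  have hex0 : ∃ a : Fin (m + 2), a ∉ insert (0 : Fin (m + 2)) (hLfin.toFinset.image g) := by
    set T := insert (0 : Fin (m + 2)) (hLfin.toFinset.image g) with hT
    have hcard : T.card < Fintype.card (Fin (m + 2)) := by
      have h1 : T.card ≤ (hLfin.toFinset.image g).card + 1 := Finset.card_insert_le _ _
      have h2 : (hLfin.toFinset.image g).card ≤ hLfin.toFinset.card :=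
        Finset.card_image_le
      have h3 : hLfin.toFinset.card = m := by
        rw [← Set.ncard_eq_toFinset_card L hLfin]; exact hm
      simp only [Fintype.card_fin]
      omega
    by_contra h
    push_neg at h
    have : Finset.univ ⊆ T := fun b _ => h b
    have := Finset.card_le_card this
    rw [Finset.card_univ] at this
    omega
  obtain ⟨a₀, ha₀⟩ := hex0
  have ha₀0 : a₀ ≠ 0 := fun h => ha₀ (by rw [h]; exact Finset.mem_insert_self 0 _)
  have ha₀g : ∀ v ∈ L, g v ≠ a₀ := by
    intro v hv h
    exact ha₀ (Finset.mem_insert_of_mem (h ▸ Finset.mem_image_of_mem g (hLfin.mem_toFinset.mpr hv)))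
  -- the bad assignment
  let x : V → Fin (m + 2) := fun u => if u ∈ L then a₀ else z u
  obtain ⟨v, hv⟩ := hguess x
  by_cases hvL : v ∈ L
  · -- v sees only R vertices, its guess is g v ≠ a₀ = x v
    have h1 : f v x = g v := by
      apply hdep
      intro u hu
      have huL : u ∉ L := fun huL => hL u huL v hvL hu
      simp only [x, if_neg huL, g, if_neg huL]
    have h2 : x v = a₀ := if_pos hvL
    rw [h1, h2] at hv
    exact ha₀g v hvL hv
  · -- v ∈ R : its guess avoids z v
    have hvR : v ∈ R := by
      by_contra h
      exact hvL ((hpart v).mpr h)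
    have h1 : f v x = f v (W v (fun u _ => z u) a₀) := by
      apply hdep
      intro u hu
      by_cases huL : u ∈ L
      · simp only [x, if_pos huL, W, if_pos huL]
      · have huR : u ∈ R := by
          by_contra h
          exact huL ((hpart u).mpr h)
        have hrelu : rel u v := Relation.TransGen.single ⟨huR, hvR, hu⟩
        simp only [x, if_neg huL, W, if_neg huL, dif_pos hrelu]
    have h2 : x v = z v := if_neg hvL
    rw [h1, h2] at hv
    exact havoid v a₀ ha₀0 hv
end

section
/- The complete bipartite graph K_{m,n} is not (m+2)-solvable, for any m ≥ 1 and n ≥ 1. -/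
/-- The complete bipartite graph $K_{m,n}$ is not $(m+2)$-solvable. -/
theorem Kmn_not_solvable (m n : ℕ) (hm : 1 ≤ m) (hn : 1 ≤ n) :
    ¬ HatSolvable (fun a b : Fin m ⊕ Fin n => a.isLeft ≠ b.isLeft) (m + 2) := by
  rintro ⟨f, hloc, hcov⟩
  -- assignment with left part constant `k`, right part `r`
  set A : Fin (m+1) → (Fin n → Fin (m+2)) → (Fin m ⊕ Fin n) → Fin (m+2) :=
    fun k r v => Sum.elim (fun _ => k.castSucc) r v with hA
  -- choose `y j` avoiding all `m+1` right guesses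
  have hy : ∀ j : Fin n, ∃ b : Fin (m+2), ∀ k : Fin (m+1),
      f (Sum.inr j) (A k (fun _ => 0)) ≠ b := by
    intro j
    have hcard : (Finset.image (fun k : Fin (m+1) => f (Sum.inr j) (A k (fun _ => 0)))
        Finset.univ) ≠ Finset.univ := by
      intro h
      have h1 := Finset.card_image_le
        (f := fun k : Fin (m+1) => f (Sum.inr j) (A k (fun _ => 0))) (s := Finset.univ)
      rw [h] at h1
      simp at h1
    have : ¬ ∀ b, b ∈ Finset.image (fun k : Fin (m+1) => f (Sum.inr j) (A k (fun _ => 0)))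
        Finset.univ := fun h => hcard (Finset.eq_univ_iff_forall.mpr h)
    push_neg at this
    obtain ⟨b, hb⟩ := this
    exact ⟨b, fun k hk => hb (Finset.mem_image.mpr ⟨k, Finset.mem_univ _, hk⟩)⟩
  choose y hyspec using hy
  -- right guesses at `A k y` only depend on the left part
  have hright : ∀ (j : Fin n) (k : Fin (m+1)), f (Sum.inr j) (A k y) ≠ y j := by
    intro j k
    have he : f (Sum.inr j) (A k y) = f (Sum.inr j) (A k (fun _ => 0)) := by
      apply hloc
      rintro (i | j') h
      · rfl
      · simp at h
    rw [he]; exact hyspec j k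
  -- left guesses don't depend on `k`
  have hleft : ∀ (i : Fin m) (k : Fin (m+1)),
      f (Sum.inl i) (A k y) = f (Sum.inl i) (A 0 y) := by
    intro i k
    apply hloc
    rintro (i' | j) h
    · simp at h
    · rfl
  -- find a value `k` missed by all `m` left guesses
  have hk : ∃ k : Fin (m+1), ∀ i : Fin m, f (Sum.inl i) (A 0 y) ≠ k.castSucc := by
    by_contra hcon
    push_neg at hcon
    choose c hc using hcon
    have hinj : Function.Injective c := by
      intro k k' h
      have h2 : k.castSucc = k'.castSucc := (hc k).symm.trans (h ▸ hc k')
      exact Fin.castSucc_injective _ h2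
    have hle := Fintype.card_le_of_injective c hinj
    simp at hle
  obtain ⟨k, hkspec⟩ := hk
  obtain ⟨v, hv⟩ := hcov (A k y)
  rcases v with i | j
  · exact hkspec i ((hleft i k).symm.trans hv)
  · exact hright j k hv
end

section
/- If there exists a p-gadget on n vertices, then there exists a p-solvable oriented graph on n·C(p,2) + p vertices. -/
/-- Ordered pairs `j < i` in `Fin p`. -/
abbrev GLPairT (p : ℕ) := {q : Fin p × Fin p // q.2 < q.1}

/-- Vertex type: one gadget copy per pair, plus the tournament vertices. -/
abbrev GLVT (p n : ℕ) := GLPairT p × Fin n ⊕ Fin p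

/-- The adjacency of the construction. -/
def GLAdj {p n : ℕ} (adj : Fin n → Fin n → Prop) : GLVT p n → GLVT p n → Prop
  | .inl (P, u), .inl (Q, v) => P = Q ∧ adj u v
  | .inl (P, _), .inr j => P.1.2 = j
  | .inr i, .inl (Q, _) => i = Q.1.1
  | .inr i, .inr j => i < j

theorem GLcard_pair (p : ℕ) : Fintype.card (GLPairT p) = p.choose 2 := by
  have h : Fintype.card (GLPairT p) = ∑ i : Fin p, i.val := by
    rw [Fintype.card_congr
      (⟨fun q => (⟨q.1.1, ⟨q.1.2.val, q.2⟩⟩ : Σ i : Fin p, Fin i.val),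
        fun s => ⟨(s.1, ⟨s.2.val, s.2.isLt.trans s.1.isLt⟩), s.2.isLt⟩,
        fun q => rfl, fun s => rfl⟩)]
    simp
  rw [h, Nat.choose_two_right, Fin.sum_univ_eq_sum_range (fun i => i) p]
  have h2 := Finset.sum_range_id_mul_two p
  omega

section Defs

variable {p n : ℕ} [NeZero p]

def GLe (i : Fin p) : ZMod p := (i.val : ZMod p)

def GLd (a : ZMod p) : Fin p := ⟨a.val, a.val_lt⟩

theorem GLde (i : Fin p) : GLd (GLe i) = i :=
  Fin.ext (ZMod.val_cast_of_lt i.isLt)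

theorem GLed (a : ZMod p) : GLe (GLd a) = a := by
  simp [GLe, GLd, ZMod.natCast_val, ZMod.cast_id]

/-- The hat assignment fed to a gadget copy: coordinate 0 is replaced by the
difference between the hat of the tournament source and the copy's own 0-hat. -/
def GLY (hn : 0 < n) (P : GLPairT p) (x : GLVT p n → Fin p) : Fin n → Fin p := fun u =>
  if u = (⟨0, hn⟩ : Fin n) then
    GLd (GLe (x (.inr P.1.1)) - GLe (x (.inl (P, ⟨0, hn⟩))))
  else x (.inl (P, u))

/-- Version with coordinate 0 zeroed out (computable by the tournament target). -/
def GLYφ (hn : 0 < n) (P : GLPairT p) (x : GLVT p n → Fin p) : Fin n → Fin p := fun u =>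
  if u = (⟨0, hn⟩ : Fin n) then 0 else x (.inl (P, u))

/-- The guessing functions for the construction. -/
def GLg (hn : 0 < n) (f : Fin n → (Fin n → Fin p) → Fin p)
    (φ : (Fin n → Fin p) → Fin p) : GLVT p n → (GLVT p n → Fin p) → Fin p
  | .inl (P, u) => fun x =>
      if u = (⟨0, hn⟩ : Fin n) then
        GLd (GLe (x (.inr P.1.1)) - GLe (f ⟨0, hn⟩ (GLY hn P x)))
      else f u (GLY hn P x)
  | .inr j => fun x =>
      GLd (GLe j - ∑ i : Fin p,
        if i < j then GLe (x (.inr i))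
        else if h : j < i then
          GLe (φ (GLYφ hn ⟨(i, j), h⟩ x)) + GLe (x (.inl (⟨(i, j), h⟩, ⟨0, hn⟩)))
        else 0)

end Defs

/-- The gadget lemma: a $p$-gadget on $n$ vertices yields a $p$-solvable oriented graph
on $n\binom{p}{2} + p$ vertices. -/
theorem gadget_lemma (p n : ℕ) (hp : 2 ≤ p) (hn : 0 < n)
    (adj : Fin n → Fin n → Prop)
    (hirr : Irreflexive adj) (horient : ∀ u v, ¬ (adj u v ∧ adj v u))
    (hnotsolv : ¬ HatSolvable adj p)
    (hgadget : ∃ (f : Fin n → (Fin n → Fin p) → Fin p) (φ : (Fin n → Fin p) → Fin p),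
      (∀ (v : Fin n) (x y : Fin n → Fin p), (∀ u, adj u v → x u = y u) → f v x = f v y) ∧
      (∀ x y : Fin n → Fin p, (∀ i, i ≠ (⟨0, hn⟩ : Fin n) → x i = y i) → φ x = φ y) ∧
      (∀ x : Fin n → Fin p, (∀ v, f v x ≠ x v) → x ⟨0, hn⟩ = φ x)) :
    ∃ (V : Type) (_ : Fintype V) (adj' : V → V → Prop),
      Fintype.card V = n * p.choose 2 + p ∧
      Irreflexive adj' ∧ (∀ u v, ¬ (adj' u v ∧ adj' v u)) ∧
      HatSolvable adj' p := by
  classical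
  obtain ⟨f, φ, hf, hφ, hprop⟩ := hgadget
  haveI : NeZero p := ⟨by omega⟩
  refine ⟨GLVT p n, inferInstance, GLAdj adj, ?_, ?_, ?_, ?_⟩
  · simp [GLcard_pair, Nat.mul_comm]
  · rintro (⟨P, u⟩ | i) h
    · exact hirr u h.2
    · exact lt_irrefl i h
  · rintro (⟨P, u⟩ | i) (⟨Q, v⟩ | j) ⟨h1, h2⟩
    · exact horient u v ⟨h1.2, h2.2⟩
    · have h3 := P.2
      rw [h1, h2] at h3
      exact lt_irrefl _ h3
    · have h3 := Q.2
      rw [h2, h1] at h3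
      exact lt_irrefl _ h3
    · exact lt_asymm h1 h2
  · refine ⟨GLg hn f φ, ?_, ?_⟩
    · -- guesses depend only on visible hats
      rintro (⟨P, u⟩ | j) x y hxy
      · have hin : ∀ w : Fin n, adj w u → x (.inl (P, w)) = y (.inl (P, w)) :=
          fun w hw => hxy _ ⟨rfl, hw⟩
        have htop : x (.inr P.1.1) = y (.inr P.1.1) := hxy _ rfl
        by_cases hu : u = (⟨0, hn⟩ : Fin n)
        · subst hu
          have hfz : f ⟨0, hn⟩ (GLY hn P x) = f ⟨0, hn⟩ (GLY hn P y) := by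
            apply hf
            intro w hw
            have hw0 : w ≠ (⟨0, hn⟩ : Fin n) := fun h => hirr _ (h ▸ hw)
            simp only [GLY, if_neg hw0]
            exact hin w hw
          simp only [GLg, if_pos rfl, htop, hfz]
        · have hfu : f u (GLY hn P x) = f u (GLY hn P y) := by
            apply hf
            intro w hw
            by_cases hw0 : w = (⟨0, hn⟩ : Fin n)
            · subst hw0
              simp only [GLY, if_pos rfl, htop, hin _ hw]
            · simp only [GLY, if_neg hw0, hin w hw]
          simp only [GLg, if_neg hu, hfu]
      · have hin : ∀ (P : GLPairT p) (w : Fin n), P.1.2 = j →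
            x (.inl (P, w)) = y (.inl (P, w)) := fun P w hP => hxy _ hP
        have htop : ∀ i : Fin p, i < j → x (.inr i) = y (.inr i) := fun i hi => hxy _ hi
        simp only [GLg]
        congr 2
        apply Finset.sum_congr rfl
        intro i _
        by_cases hij : i < j
        · rw [if_pos hij, if_pos hij, htop i hij]
        · rw [if_neg hij, if_neg hij]
          by_cases hji : j < i
          · rw [dif_pos hji, dif_pos hji]
            have hYeq : GLYφ hn ⟨(i, j), hji⟩ x = GLYφ hn ⟨(i, j), hji⟩ y := by
              funext w
              by_cases hw0 : w = (⟨0, hn⟩ : Fin n) <;>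
                simp [GLYφ, hw0, hin ⟨(i, j), hji⟩ w rfl]
            rw [hYeq, hin ⟨(i, j), hji⟩ _ rfl]
          · rw [dif_neg hji, dif_neg hji]
    · -- every assignment is guessed correctly somewhere
      intro x
      by_contra hall
      push_neg at hall
      -- each gadget copy, if everywhere wrong, reveals the source hat
      have hval : ∀ (i j : Fin p) (h : j < i),
          GLe (φ (GLYφ hn ⟨(i, j), h⟩ x)) + GLe (x (.inl (⟨(i, j), h⟩, ⟨0, hn⟩)))
            = GLe (x (.inr i)) := by
        intro i j h
        set P : GLPairT p := ⟨(i, j), h⟩ with hP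
        have hbad : ∀ v, f v (GLY hn P x) ≠ GLY hn P x v := by
          intro v hveq
          by_cases hv : v = (⟨0, hn⟩ : Fin n)
          · subst hv
            apply hall (.inl (P, ⟨0, hn⟩))
            simp only [GLg, eq_self_iff_true, if_true]
            rw [hveq]
            simp only [GLY, eq_self_iff_true, if_true]
            rw [GLed, sub_sub_cancel, GLde]
          · apply hall (.inl (P, v))
            simp only [GLg, if_neg hv]
            rw [hveq]
            simp only [GLY, if_neg hv]
        have hkey := hprop (GLY hn P x) hbad
        have hphieq : φ (GLY hn P x) = φ (GLYφ hn P x) := by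
          apply hφ
          intro w hw
          simp only [GLY, GLYφ, if_neg hw]
        simp only [GLY, eq_self_iff_true, if_true] at hkey
        have h2 := congrArg GLe hkey
        rw [GLed, hphieq] at h2
        linear_combination -h2
      set S : ZMod p := ∑ i : Fin p, GLe (x (.inr i)) with hS
      set s : Fin p := GLd S with hs
      apply hall (.inr s)
      simp only [GLg]
      have h1 : ∀ i : Fin p,
          (if i < s then GLe (x (.inr i))
            else if h : s < i then
              GLe (φ (GLYφ hn ⟨(i, s), h⟩ x)) + GLe (x (.inl (⟨(i, s), h⟩, ⟨0, hn⟩)))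
            else 0)
          = if i = s then 0 else GLe (x (.inr i)) := by
        intro i
        rcases lt_trichotomy i s with h | h | h
        · rw [if_pos h, if_neg (ne_of_lt h)]
        · subst h
          rw [if_neg (lt_irrefl _), dif_neg (lt_irrefl _), if_pos rfl]
        · rw [if_neg (asymm h), dif_pos h, hval i s h, if_neg (ne_of_gt h)]
      rw [Finset.sum_congr rfl (fun i _ => h1 i)]
      have h2 : ∀ i : Fin p, (if i = s then (0 : ZMod p) else GLe (x (.inr i)))
          = GLe (x (.inr i)) - (if i = s then GLe (x (.inr i)) else 0) := by
        intro i
        by_cases h : i = s <;> simp [h]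
      rw [Finset.sum_congr rfl (fun i _ => h2 i), Finset.sum_sub_distrib,
        Finset.sum_ite_eq' Finset.univ s (fun i => GLe (x (.inr i)))]
      simp only [Finset.mem_univ, if_pos]
      have hes : GLe s = S := GLed S
      rw [← hS, hes, sub_sub_cancel, GLde]
end

section
/- There exists a 3-solvable oriented graph on 12 vertices (obtained by the gadget construction applied to the directed 3-cycle, which is a 3-gadget on 3 vertices: 3·C(3,2) + 3 = 12 vertices). -/
/-- The vertex set: 3 tournament vertices plus 3 gadget copies of 3 vertices each. -/
abbrev HV : Type := Fin 3 ⊕ Fin 3 × Fin 3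

/-- Larger endpoint of gadget copy `p` (copies are for pairs (1,0), (2,0), (2,1)). -/
def gfst : Fin 3 → Fin 3 := ![1, 2, 2]
/-- Smaller endpoint of gadget copy `p`. -/
def gsnd : Fin 3 → Fin 3 := ![0, 0, 1]

/-- Adjacency (as a Bool): `adjB u v` means `v` sees `u`. -/
def adjB : HV → HV → Bool
  | .inl k, .inl j => k < j
  | .inl i, .inr (p, _) => i = gfst p
  | .inr (p, _), .inl j => gsnd p = j
  | .inr (p, a), .inr (p', a') => p = p' && a' = a + 1

abbrev hadj (u v : HV) : Prop := adjB u v = true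

/-- The guessing strategies. -/
def hf : HV → (HV → Fin 3) → Fin 3
  | .inl 0 => fun x => 0 - (x (.inr (0,0)) + x (.inr (0,1)) + x (.inr (0,2)))
                         - (x (.inr (1,0)) + x (.inr (1,1)) + x (.inr (1,2)))
  | .inl 1 => fun x => 1 - x (.inl 0) - (x (.inr (2,0)) + x (.inr (2,1)) + x (.inr (2,2)))
  | .inl 2 => fun x => 2 - x (.inl 0) - x (.inl 1)
  | .inr (p, 0) => fun x => x (.inr (p, 2)) + x (.inl (gfst p))
  | .inr (p, 1) => fun x => x (.inr (p, 0)) - x (.inl (gfst p))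
  | .inr (p, 2) => fun x => x (.inr (p, 1))

lemma gadget_sum (s u v w : Fin 3) (h0 : u ≠ w + s) (h1 : v ≠ u - s) (h2 : w ≠ v) :
    u + v + w = s := by revert s u v w; decide

lemma final (a b c : Fin 3) (h0 : 0 - b - c ≠ a) (h1 : 1 - a - c ≠ b) (h2 : 2 - a - b ≠ c) :
    False := by revert a b c; decide

/-- There exists a 3-solvable oriented graph on 12 vertices. -/
theorem exists_three_solvable_oriented_twelve :
    ∃ (V : Type) (_ : Fintype V) (adj : V → V → Prop),
      Fintype.card V = 12 ∧
      Irreflexive adj ∧ (∀ u v, ¬ (adj u v ∧ adj v u)) ∧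
      HatSolvable adj 3 := by
  refine ⟨HV, inferInstance, hadj, by decide, show ∀ v : HV, ¬ hadj v v by decide,
    by decide, hf, ?_, ?_⟩
  · -- strategies depend only on visible hats
    intro v x y h
    match v with
    | .inl 0 =>
        show (0 : Fin 3) - (x (.inr (0,0)) + x (.inr (0,1)) + x (.inr (0,2)))
              - (x (.inr (1,0)) + x (.inr (1,1)) + x (.inr (1,2))) = _
        rw [h (.inr (0,0)) (by decide), h (.inr (0,1)) (by decide),
            h (.inr (0,2)) (by decide), h (.inr (1,0)) (by decide),
            h (.inr (1,1)) (by decide), h (.inr (1,2)) (by decide)]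
        rfl
    | .inl 1 =>
        show (1 : Fin 3) - x (.inl 0) - (x (.inr (2,0)) + x (.inr (2,1)) + x (.inr (2,2))) = _
        rw [h (.inl 0) (by decide), h (.inr (2,0)) (by decide),
            h (.inr (2,1)) (by decide), h (.inr (2,2)) (by decide)]
        rfl
    | .inl 2 =>
        show (2 : Fin 3) - x (.inl 0) - x (.inl 1) = _
        rw [h (.inl 0) (by decide), h (.inl 1) (by decide)]
        rfl
    | .inr (p, a) =>
        fin_cases p <;> fin_cases a <;>
          simp only [hf] <;>
          rw [h _ (by decide)] <;>
          first
          | rfl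
          | rw [h _ (by decide)]
  · -- every assignment is guessed by someone
    intro x
    by_contra hc
    push_neg at hc
    have g : ∀ p : Fin 3,
        x (.inr (p,0)) + x (.inr (p,1)) + x (.inr (p,2)) = x (.inl (gfst p)) := by
      intro p
      exact gadget_sum _ _ _ _ (Ne.symm (hc (.inr (p,0)))) (Ne.symm (hc (.inr (p,1))))
        (Ne.symm (hc (.inr (p,2))))
    have h0 : (0 : Fin 3) - (x (.inr (0,0)) + x (.inr (0,1)) + x (.inr (0,2)))
        - (x (.inr (1,0)) + x (.inr (1,1)) + x (.inr (1,2))) ≠ x (.inl 0) := hc (.inl 0)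
    have h1 : (1 : Fin 3) - x (.inl 0)
        - (x (.inr (2,0)) + x (.inr (2,1)) + x (.inr (2,2))) ≠ x (.inl 1) := hc (.inl 1)
    have h2 : (2 : Fin 3) - x (.inl 0) - x (.inl 1) ≠ x (.inl 2) := hc (.inl 2)
    rw [g 0, g 1, show gfst 0 = 1 from rfl, show gfst 1 = 2 from rfl] at h0
    rw [g 2, show gfst 2 = 2 from rfl] at h1
    exact final (x (.inl 0)) (x (.inl 1)) (x (.inl 2)) h0 h1 h2
end

section
/- Fix guessing functions on an acyclic directed graph A with I vertices over colour set [q]. For every d with 0 ≤ d ≤ I, the number of hat assignments x ∈ [q]^I for which exactly d vertices of A guess correctly is C(I,d)·(q−1)^{I−d}. -/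
/-!
The residual map `x ↦ (x v - f v x)_v` on `(Fin q)^V` is injective, by well-founded induction
along the acyclic graph: once `x` and `y` agree on the in-neighbours of `v`, the guesses at `v`
agree, so equal residuals force `x v = y v`. Hence it is a bijection, and it sends the set of
vertices guessing correctly to the zero set of the residual, which leaves the count of vectors
with exactly `d` zero coordinates.
-/

open Finset Function

theorem Relation.wellFounded_of_transGen_irrefl {V : Type*} [Finite V] {r : V → V → Prop}
    (h : ∀ v, ¬ Relation.TransGen r v v) : WellFounded r :=
  haveI : Std.Irrefl (Relation.TransGen r) := ⟨h⟩
  Subrelation.wf Relation.TransGen.single (Finite.wellFounded_of_trans_of_irrefl _)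

theorem injective_sub_of_wellFounded {V α : Type*} [AddGroup α] {r : V → V → Prop}
    (hr : WellFounded r) (f : V → (V → α) → α)
    (hdep : ∀ (v : V) (x y : V → α), (∀ u, r u v → x u = y u) → f v x = f v y) :
    Injective fun x v => x v - f v x := by
  intro x y hxy
  funext v
  induction v using hr.induction with
  | _ v ih =>
    have hv : x v - f v x = y v - f v y := congr_fun hxy v
    rwa [hdep v x y ih, sub_left_inj] at hv

section FiberCount

variable {V α : Type*} [Fintype V] [DecidableEq V] [Fintype α] [DecidableEq α]

theorem card_filter_fiber_eq (a : α) (S : Finset V) :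
    #{y : V → α | ({v | y v = a} : Finset V) = S} =
      (Fintype.card α - 1) ^ (Fintype.card V - #S) := by
  have hpi : ({y : V → α | ({v | y v = a} : Finset V) = S} : Finset _) =
      Fintype.piFinset fun v => if v ∈ S then {a} else {a}ᶜ := by
    ext y
    simp only [mem_filter, mem_univ, true_and, Fintype.mem_piFinset, Finset.ext_iff]
    refine forall_congr' fun v => ?_
    split_ifs <;> simp_all
  rw [hpi, Fintype.card_piFinset]
  simp [apply_ite card, prod_ite, filter_not, card_univ_sdiff, card_compl]

theorem card_filter_card_fiber_eq (a : α) (d : ℕ) :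
    #{y : V → α | #{v | y v = a} = d} =
      (Fintype.card V).choose d * (Fintype.card α - 1) ^ (Fintype.card V - d) := by
  calc #{y : V → α | #{v | y v = a} = d}
      = ∑ S ∈ powersetCard d univ,
          #{y : V → α | #{v | y v = a} = d ∧ ({v | y v = a} : Finset V) = S} := by
        simp_rw [← filter_filter]
        exact card_eq_sum_card_fiberwise fun y hy => by simpa using hy
    _ = ∑ S ∈ powersetCard d univ, (Fintype.card α - 1) ^ (Fintype.card V - d) := by
        refine sum_congr rfl fun S hS => ?_
        rw [mem_powersetCard_univ] at hS
        rw [← hS, ← card_filter_fiber_eq a S]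
        congr 2
        ext y
        exact and_iff_right_of_imp (congr_arg card)
    _ = _ := by simp

end FiberCount

theorem acyclic_correct_count_general {V : Type*} [Fintype V] (adj : V → V → Prop)
    (q : ℕ) (hq : 1 ≤ q)
    (hacyclic : ∀ v, ¬ Relation.TransGen adj v v)
    (f : V → (V → Fin q) → Fin q)
    (hdep : ∀ (v : V) (x y : V → Fin q), (∀ u, adj u v → x u = y u) → f v x = f v y)
    (d : ℕ) :
    Nat.card {x : V → Fin q // Nat.card {v : V // f v x = x v} = d}
      = (Fintype.card V).choose d * (q - 1) ^ (Fintype.card V - d) := by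
  classical
  have : NeZero q := ⟨by omega⟩
  have hinj :=
    injective_sub_of_wellFounded (Relation.wellFounded_of_transGen_irrefl hacyclic) f hdep
  let residual := Equiv.ofBijective _ (Finite.injective_iff_bijective.mp hinj)
  calc Nat.card {x : V → Fin q // Nat.card {v : V // f v x = x v} = d}
      = Nat.card {y : V → Fin q // Nat.card {v : V // y v = 0} = d} :=
        Nat.card_congr <| residual.subtypeEquiv fun x => by
          simp only [residual, Equiv.ofBijective_apply, sub_eq_zero, @eq_comm _ (x _)]
    _ = _ := by
        simpa [Nat.card_eq_fintype_card, Fintype.card_subtype] using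
          card_filter_card_fiber_eq (V := V) (0 : Fin q) d

/-- On an acyclic directed graph on $I$ vertices with any guessing functions, exactly
$\binom{I}{d}(q-1)^{I-d}$ hat assignments are guessed correctly by exactly $d$ vertices. -/
theorem acyclic_correct_count {V : Type*} [Fintype V] (adj : V → V → Prop)
    (q : ℕ) (hq : 1 ≤ q)
    (hacyclic : ∀ v, ¬ Relation.TransGen adj v v)
    (f : V → (V → Fin q) → Fin q)
    (hdep : ∀ (v : V) (x y : V → Fin q), (∀ u, adj u v → x u = y u) → f v x = f v y)
    (d : ℕ) (hd : d ≤ Fintype.card V) :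
    Nat.card {x : V → Fin q // Nat.card {v : V // f v x = x v} = d}
      = (Fintype.card V).choose d * (q - 1) ^ (Fintype.card V - d) :=
  acyclic_correct_count_general adj q hq hacyclic f hdep d
end

section
/- The cycle C_{2n} (undirected, each vertex sees its two neighbours) is 3-solvable whenever n ≡ 0 (mod 3); in particular every cycle of length divisible by 6 is 3-solvable. -/
/-!
Suppose every vertex guesses wrong under the strategy below. Reading the wrong guesses of
`w_{i-1}` and `v_i` together, the representative in `{0, 1, 2}` of `x_i - y_i` cannot increase
from `i - 1` to `i`, so around the cycle it is a constant `u`. Given that, the two wrong guesses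
force `y_i - x_{i-1} = 2`, except at the special pair `(w_{-1}, v_0)` where it is `0`. Summing
around the cycle, `∑ (y_i - x_{i-1}) = ∑ (y_i - x_i) = -n u`, while the forced values sum to
`2n + 1`; these differ modulo 3 when `3 ∣ n`.
-/

theorem ZMod.apply_eq_apply_of_forall_apply_add_one_le {n : ℕ} [NeZero n] {α : Type*}
    [PartialOrder α] {f : ZMod n → α} (h : ∀ i, f (i + 1) ≤ f i) (i j : ZMod n) :
    f i = f j := by
  have iterate : ∀ i (k : ℕ), f (i + k) ≤ f i := by
    intro i k
    induction k with
    | zero => simp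
    | succ k ih =>
      rw [Nat.cast_succ, ← add_assoc]
      exact (h _).trans ih
  have hle : ∀ i j, f j ≤ f i := fun i j => by
    simpa using iterate i (j - i).val
  exact le_antisymm (hle j i) (hle i j)

namespace EvenCycle

/-- `f_i` of the paper; `s` marks the special vertex `f_1`. -/
def guessV (s : Bool) (yPrev y : ZMod 3) : ZMod 3 :=
  if y = yPrev + (if s then -1 else 1) then y + 1 else y - 1

/-- `g_i` of the paper; `s` marks the special vertex `g_n`. -/
def guessW (s : Bool) (x xNext : ZMod 3) : ZMod 3 :=
  if x = xNext + (if s then 0 else 1) then x - 1 else x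

theorem val_sub_le_of_guesses_wrong (s : Bool) (x y x' y' : ZMod 3)
    (hw : guessW s x x' ≠ y) (hv : guessV s y y' ≠ x') : (x' - y').val ≤ (x - y).val := by
  revert s x y x' y'
  decide

theorem sub_eq_of_guesses_wrong (s : Bool) (x y x' y' : ZMod 3)
    (hw : guessW s x x' ≠ y) (hv : guessV s y y' ≠ x') (hu : x' - y' = x - y) :
    y' - x = 2 + if s then 1 else 0 := by
  revert s x y x' y'
  decide

/-- `.inl i` is `v_i` and `.inr j` is `w_j`; the paper's `v_1` and `w_n` become `v_0` and
`w_{-1}`, so that the special pair `(w_{i-1}, v_i)` is the one with `i = 0`. -/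
def strategy (n : ℕ) : ZMod n ⊕ ZMod n → (ZMod n ⊕ ZMod n → ZMod 3) → ZMod 3
  | .inl i, c => guessV (i = 0) (c (.inr (i - 1))) (c (.inr i))
  | .inr j, c => guessW (j + 1 = 0) (c (.inl j)) (c (.inl (j + 1)))

theorem sum_sub_comp_sub_one {n : ℕ} [NeZero n] (x y : ZMod n → ZMod 3) :
    ∑ i, (y i - x (i - 1)) = ∑ i, (y i - x i) := by
  rw [Finset.sum_sub_distrib, Finset.sum_sub_distrib,
    Fintype.sum_equiv (Equiv.subRight 1) (fun i => x (i - 1)) x fun _ => rfl]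

theorem exists_strategy_eq {n : ℕ} [NeZero n] (h3 : 3 ∣ n) (c : ZMod n ⊕ ZMod n → ZMod 3) :
    ∃ v, strategy n v c = c v := by
  by_contra! hwrong
  set x : ZMod n → ZMod 3 := fun i => c (.inl i)
  set y : ZMod n → ZMod 3 := fun i => c (.inr i)
  have hw (i : ZMod n) : guessW (i = 0) (x (i - 1)) (x i) ≠ y (i - 1) := by
    simpa only [strategy, sub_add_cancel] using hwrong (.inr (i - 1))
  have hv (i : ZMod n) : guessV (i = 0) (y (i - 1)) (y i) ≠ x i := hwrong (.inl i)
  have hconst (i : ZMod n) : x i - y i = x 0 - y 0 :=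
    ZMod.val_injective 3 <| ZMod.apply_eq_apply_of_forall_apply_add_one_le
      (f := fun i => (x i - y i).val)
      (fun i => by simpa using val_sub_le_of_guesses_wrong _ _ _ _ _ (hw (i + 1)) (hv (i + 1)))
      i 0
  have hstep (i : ZMod n) : y i - x (i - 1) = 2 + if i = 0 then 1 else 0 := by
    simpa using sub_eq_of_guesses_wrong _ _ _ _ _ (hw i) (hv i)
      ((hconst i).trans (hconst (i - 1)).symm)
  have hn : (n : ZMod 3) = 0 := (ZMod.natCast_eq_zero_iff n 3).mpr h3
  have : (1 : ZMod 3) = 0 :=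
    calc (1 : ZMod 3) = ∑ i : ZMod n, (2 + if i = 0 then 1 else 0) := by
          simp [Finset.sum_add_distrib, ZMod.card, hn]
      _ = ∑ i, (y i - x (i - 1)) := by simp only [hstep]
      _ = ∑ i, -(x i - y i) := by simp only [sum_sub_comp_sub_one, neg_sub]
      _ = 0 := by simp [hconst, ZMod.card, hn]
  exact absurd this (by decide)

end EvenCycle

/-- The cycle $C_{2n}$ is 3-solvable when $3 \mid n$ (cycles of length divisible by 6). -/
theorem even_cycle_three_solvable (n : ℕ) (hn : 1 < n) (h3 : 3 ∣ n) :
    HatSolvable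
      (fun a b : ZMod n ⊕ ZMod n =>
        match a, b with
        | .inl i, .inr j => j = i ∨ j = i - 1
        | .inr j, .inl i => j = i ∨ j = i - 1
        | _, _ => False) 3 := by
  have : NeZero n := ⟨by omega⟩
  refine ⟨EvenCycle.strategy n, ?_, EvenCycle.exists_strategy_eq h3⟩
  rintro (i | j) c d hcd
  · dsimp only [EvenCycle.strategy]
    rw [hcd (.inr i) (Or.inl rfl), hcd (.inr (i - 1)) (Or.inr rfl)]
  · dsimp only [EvenCycle.strategy]
    rw [hcd (.inl j) (Or.inl rfl),
      hcd (.inl (j + 1)) (Or.inr (add_sub_cancel_right j 1).symm)]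
end

section
/- With the L-shaped guessing strategy on the cycle C_{2n} over 3 colours, if n ≡ 1 (mod 3), then the configurations guessed incorrectly by every vertex are exactly x = y = (a, a+2, a+1, a, a+2, a+1, ..., a) for a ∈ Z/3; in particular there are exactly 3 such configurations out of 3^{2n}. -/
/-- The `L`-shaped guessing function of the `v`-vertices: vertex `v_i` sees `y_{i-1}, y_i`. -/
def cycleGuessF (n : ℕ) (y : ZMod n → ZMod 3) (i : ZMod n) : ZMod 3 :=
  if i = 0 then (if y 0 = y (-1) - 1 then y 0 + 1 else y 0 - 1)
  else (if y i = y (i - 1) + 1 then y i + 1 else y i - 1)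

/-- The `L`-shaped guessing function of the `w`-vertices: vertex `w_i` sees `x_i, x_{i+1}`. -/
def cycleGuessG (n : ℕ) (x : ZMod n → ZMod 3) (i : ZMod n) : ZMod 3 :=
  if i = -1 then (if x i = x 0 then x i - 1 else x i)
  else (if x i = x (i + 1) + 1 then x i - 1 else x i)

/-- Key interior transition facts over `ZMod 3`. -/
private lemma cycleKeyInt : ∀ a b c d : ZMod 3,
    ((if a = c + 1 then a - 1 else a) ≠ b) →
    ((if d = b + 1 then d + 1 else d - 1) ≠ c) →
    ((a = b → c = a - 1 ∧ d = c) ∧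
     (a - b = 1 → c ≠ d → (c - d = 1 ∧ c = a)) ∧
     (a - b = 2 → c - d = 2 → c = a - 2) ∧
     (c - d = 2 → a ≠ b → a - b = 2)) := by decide

/-- Key boundary (wrap-around) transition facts over `ZMod 3`. -/
private lemma cycleKeyBdry : ∀ a b c d : ZMod 3,
    ((if a = c then a - 1 else a) ≠ b) →
    ((if d = b - 1 then d + 1 else d - 1) ≠ c) →
    ((a = b → c = d) ∧
     (a - b = 1 → c ≠ d → (c - d = 1 ∧ a = c + 2)) ∧
     (a - b = 2 → c - d = 2 → c = a - 1)) := by decide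

private lemma cycleZNe : ∀ e : ZMod 3, e ≠ 0 → e = 1 ∨ e = 2 := by decide
private lemma cycleBk1 : ∀ u : ZMod 3, (if u = u + 1 + 1 then u + 1 else u - 1) ≠ u := by decide
private lemma cycleBk2 : ∀ u : ZMod 3, (if u = u - 1 then u + 1 else u - 1) ≠ u := by decide
private lemma cycleBk3 : ∀ u : ZMod 3, (if u = u then u - 1 else u) ≠ u := by decide
private lemma cycleBk4 : ∀ u : ZMod 3, (if u = u - 1 + 1 then u - 1 else u) ≠ u := by decide

/-- For `n ≡ 1 (mod 3)`, the configurations on `C_{2n}` missed by every vertex under the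
L-shaped strategy are exactly `x = y = (a, a+2, a+1, a, …, a)` for `a ∈ ℤ/3`. -/
theorem cycle_missed_configs (n : ℕ) (hn : 1 < n) (h3 : n % 3 = 1)
    (x y : ZMod n → ZMod 3) :
    ((∀ i, cycleGuessF n y i ≠ x i) ∧ (∀ i, cycleGuessG n x i ≠ y i)) ↔
      ∃ a : ZMod 3, (∀ i : ZMod n, x i = a - (i.val : ZMod 3)) ∧
        (∀ i : ZMod n, y i = a - (i.val : ZMod 3)) := by
  haveI : NeZero n := ⟨by omega⟩
  have hcast : ((n - 1 : ℕ) : ZMod n) = -1 := by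
    rw [Nat.cast_sub (by omega : 1 ≤ n), ZMod.natCast_self, Nat.cast_one, zero_sub]
  have hvalneg1 : (-1 : ZMod n).val = n - 1 := by
    rw [← hcast, ZMod.val_cast_of_lt (by omega)]
  have hc3 : ((n - 1 : ℕ) : ZMod 3) = 0 := by
    obtain ⟨m, hm⟩ : 3 ∣ n - 1 := ⟨(n - 1) / 3, by omega⟩
    rw [hm, Nat.cast_mul, ZMod.natCast_self, zero_mul]
  have hne0 : ∀ k : ℕ, 0 < k → k < n → ((k : ℕ) : ZMod n) ≠ 0 := by
    intro k hk hlt h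
    have := congrArg ZMod.val h
    rw [ZMod.val_cast_of_lt hlt, ZMod.val_zero] at this
    omega
  have hnem1 : ∀ k : ℕ, k < n - 1 → ((k : ℕ) : ZMod n) ≠ -1 := by
    intro k hk h
    rw [← hcast] at h
    have := congrArg ZMod.val h
    rw [ZMod.val_cast_of_lt (by omega), ZMod.val_cast_of_lt (by omega)] at this
    omega
  constructor
  · rintro ⟨H1, H2⟩
    -- interior conditions
    have hGk : ∀ k : ℕ, k ≤ n - 2 →
        (if x (k : ZMod n) = x ((k + 1 : ℕ) : ZMod n) + 1
          then x (k : ZMod n) - 1 else x (k : ZMod n)) ≠ y (k : ZMod n) := by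
      intro k hk
      have h := H2 (k : ZMod n)
      rw [cycleGuessG, if_neg (hnem1 k (by omega))] at h
      have e : ((k + 1 : ℕ) : ZMod n) = (k : ZMod n) + 1 := by push_cast; ring
      rw [e]; exact h
    have hFk : ∀ k : ℕ, k ≤ n - 2 →
        (if y ((k + 1 : ℕ) : ZMod n) = y (k : ZMod n) + 1
          then y ((k + 1 : ℕ) : ZMod n) + 1 else y ((k + 1 : ℕ) : ZMod n) - 1)
          ≠ x ((k + 1 : ℕ) : ZMod n) := by
      intro k hk
      have h := H1 ((k + 1 : ℕ) : ZMod n)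
      rw [cycleGuessF, if_neg (hne0 (k + 1) (by omega) (by omega))] at h
      have e : ((k + 1 : ℕ) : ZMod n) - 1 = (k : ZMod n) := by push_cast; ring
      rw [e] at h; exact h
    -- boundary conditions
    have hGb : (if x ((n - 1 : ℕ) : ZMod n) = x 0
        then x ((n - 1 : ℕ) : ZMod n) - 1 else x ((n - 1 : ℕ) : ZMod n))
        ≠ y ((n - 1 : ℕ) : ZMod n) := by
      have h := H2 (-1)
      rw [cycleGuessG, if_pos rfl, ← hcast] at h
      exact h
    have hFb : (if y 0 = y ((n - 1 : ℕ) : ZMod n) - 1 then y 0 + 1 else y 0 - 1) ≠ x 0 := by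
      have h := H1 0
      rw [cycleGuessF, if_pos rfl, ← hcast] at h
      exact h
    have bdry := cycleKeyBdry _ _ _ _ hGb hFb
    -- zero propagation to n-1
    have hzprop : ∀ j k : ℕ, k + j = n - 1 → x (k : ZMod n) = y (k : ZMod n) →
        x ((n - 1 : ℕ) : ZMod n) = y ((n - 1 : ℕ) : ZMod n) := by
      intro j
      induction j with
      | zero =>
        intro k hk h
        obtain rfl : k = n - 1 := by omega
        exact h
      | succ j ih =>
        intro k hk h
        have hk2 : k ≤ n - 2 := by omega
        have hs := ((cycleKeyInt _ _ _ _ (hGk k hk2) (hFk k hk2)).1 h).2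
        exact ih (k + 1) (by omega) hs.symm
    -- x 0 = y 0
    have h0 : x 0 = y 0 := by
      by_contra h0
      have hNZ : ∀ k : ℕ, k ≤ n - 1 → x (k : ZMod n) ≠ y (k : ZMod n) := by
        intro k hk hcontra
        have h1 := hzprop (n - 1 - k) k (by omega) hcontra
        have h2 := bdry.1 h1
        exact h0 h2
      have hNZ0 : x 0 ≠ y 0 := h0
      have hnm1 : x ((n - 1 : ℕ) : ZMod n) ≠ y ((n - 1 : ℕ) : ZMod n) := hNZ (n - 1) le_rfl
      rcases cycleZNe _ (sub_ne_zero.mpr hnm1) with h1 | h2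
      · -- s_{n-1} = 1 : all ones, x constant, boundary contradiction
        obtain ⟨hs01, hb2⟩ := bdry.2.1 h1 hNZ0
        have hone : ∀ k : ℕ, k ≤ n - 1 →
            (x (k : ZMod n) - y (k : ZMod n) = 1 ∧ x (k : ZMod n) = x 0) := by
          intro k
          induction k with
          | zero =>
            intro _
            constructor
            · simpa using hs01
            · simp
          | succ k ih =>
            intro hk
            obtain ⟨i1, i2⟩ := ih (by omega)
            have hk2 : k ≤ n - 2 := by omega
            have hs := (cycleKeyInt _ _ _ _ (hGk k hk2) (hFk k hk2)).2.1 i1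
              (hNZ (k + 1) (by omega))
            exact ⟨hs.1, by rw [hs.2, i2]⟩
          
        have heq : x ((n - 1 : ℕ) : ZMod n) = x 0 := (hone (n - 1) le_rfl).2
        rw [heq] at hb2
        have : (2 : ZMod 3) = 0 := by linear_combination -hb2
        exact absurd this (by decide)
      · -- s_{n-1} = 2 : all twos, x decreases by 2, boundary contradiction via n ≡ 1 (mod 3)
        have htwo : ∀ j : ℕ, j ≤ n - 1 →
            x ((n - 1 - j : ℕ) : ZMod n) - y ((n - 1 - j : ℕ) : ZMod n) = 2 := by
          intro j
          induction j with
          | zero => intro _; simpa using h2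
          | succ j ih =>
            intro hj
            have hij := ih (by omega)
            have hk : n - 1 - (j + 1) ≤ n - 2 := by omega
            have hkk : n - 1 - (j + 1) + 1 = n - 1 - j := by omega
            have hcd : x ((n - 1 - (j + 1) + 1 : ℕ) : ZMod n)
                - y ((n - 1 - (j + 1) + 1 : ℕ) : ZMod n) = 2 := by rw [hkk]; exact hij
            exact (cycleKeyInt _ _ _ _ (hGk _ hk) (hFk _ hk)).2.2.2 hcd
              (hNZ (n - 1 - (j + 1)) (by omega))
        have htw : ∀ k : ℕ, k ≤ n - 1 → x (k : ZMod n) - y (k : ZMod n) = 2 := by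
          intro k hk
          have := htwo (n - 1 - k) (by omega)
          rwa [show n - 1 - (n - 1 - k) = k by omega] at this
        have hxc : ∀ k : ℕ, k ≤ n - 1 → x (k : ZMod n) = x 0 - 2 * (k : ZMod 3) := by
          intro k
          induction k with
          | zero => intro _; simp
          | succ k ih =>
            intro hk
            have hk2 : k ≤ n - 2 := by omega
            have hs := (cycleKeyInt _ _ _ _ (hGk k hk2) (hFk k hk2)).2.2.1
              (htw k (by omega)) (htw (k + 1) (by omega))
            rw [hs, ih (by omega)]
            push_cast
            ring
        have hb3 : x 0 = x ((n - 1 : ℕ) : ZMod n) - 1 :=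
          bdry.2.2 (htw (n - 1) le_rfl) (by simpa using htw 0 (by omega))
        have hxe : x ((n - 1 : ℕ) : ZMod n) = x 0 := by
          rw [hxc (n - 1) le_rfl, hc3, mul_zero, sub_zero]
        rw [hxe] at hb3
        have : (1 : ZMod 3) = 0 := by linear_combination hb3
        exact absurd this (by decide)
    -- main chain
    have hch : ∀ k : ℕ, k ≤ n - 1 →
        (x (k : ZMod n) = x 0 - (k : ZMod 3) ∧ y (k : ZMod n) = x (k : ZMod n)) := by
      intro k
      induction k with
      | zero =>
        intro _
        constructor
        · simp
        · simpa using h0.symm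
      | succ k ih =>
        intro hk
        obtain ⟨i1, i2⟩ := ih (by omega)
        have hk2 : k ≤ n - 2 := by omega
        have hs := (cycleKeyInt _ _ _ _ (hGk k hk2) (hFk k hk2)).1 i2.symm
        constructor
        · rw [hs.1, i1]
          push_cast
          ring
        · exact hs.2
    refine ⟨x 0, ?_, ?_⟩ <;> intro i
    · have hv : i.val ≤ n - 1 := by have := ZMod.val_lt i; omega
      have hi : ((i.val : ℕ) : ZMod n) = i := ZMod.natCast_rightInverse i
      have h := hch i.val hv
      rw [hi] at h
      exact h.1
    · have hv : i.val ≤ n - 1 := by have := ZMod.val_lt i; omega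
      have hi : ((i.val : ℕ) : ZMod n) = i := ZMod.natCast_rightInverse i
      have h := hch i.val hv
      rw [hi] at h
      rw [h.2]
      exact h.1
  · rintro ⟨a, hx, hy⟩
    constructor
    · intro i
      rw [cycleGuessF]
      by_cases hi : i = 0
      · subst hi
        rw [if_pos rfl, hx 0, hy 0, hy (-1), ZMod.val_zero, hvalneg1, hc3]
        simp only [Nat.cast_zero, sub_zero]
        exact cycleBk2 a
      · rw [if_neg hi]
        have hvlt : i.val < n := ZMod.val_lt i
        have hi' : ((i.val : ℕ) : ZMod n) = i := ZMod.natCast_rightInverse i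
        have hv1 : 1 ≤ i.val := by
          rcases Nat.eq_zero_or_pos i.val with h | h
          · exact absurd (by rw [← hi', h, Nat.cast_zero]) hi
          · exact h
        have him1 : i - 1 = ((i.val - 1 : ℕ) : ZMod n) := by
          rw [Nat.cast_sub hv1, Nat.cast_one, hi']
        have hvm1 : (i - 1).val = i.val - 1 := by
          rw [him1, ZMod.val_cast_of_lt (by omega)]
        rw [hx i, hy i, hy (i - 1), hvm1, Nat.cast_sub hv1, Nat.cast_one]
        have e : a - ((i.val : ZMod 3) - 1) = (a - (i.val : ZMod 3)) + 1 := by ring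
        rw [e]
        exact cycleBk1 _
    · intro i
      rw [cycleGuessG]
      by_cases hi : i = -1
      · subst hi
        rw [if_pos rfl, hx (-1), hx 0, hy (-1), ZMod.val_zero, hvalneg1, hc3]
        simp only [Nat.cast_zero, sub_zero]
        simpa using cycleBk3 a
      · rw [if_neg hi]
        have hvlt : i.val < n := ZMod.val_lt i
        have hi' : ((i.val : ℕ) : ZMod n) = i := ZMod.natCast_rightInverse i
        have hvlt1 : i.val < n - 1 := by
          rcases Nat.lt_or_ge i.val (n - 1) with h | h
          · exact h
          · exact absurd (by rw [← hi', show i.val = n - 1 by omega, hcast]) hi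
        have hip1 : i + 1 = ((i.val + 1 : ℕ) : ZMod n) := by
          rw [Nat.cast_add, Nat.cast_one, hi']
        have hvp1 : (i + 1).val = i.val + 1 := by
          rw [hip1, ZMod.val_cast_of_lt (by omega)]
        rw [hx i, hx (i + 1), hy i, hvp1, Nat.cast_add, Nat.cast_one]
        have e : a - ((i.val : ZMod 3) + 1) = (a - (i.val : ZMod 3)) - 1 := by ring
        rw [e]
        exact cycleBk4 _
end
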